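/- arXiv:1404.5259 — 6 statements merged into one kernel-verified Lean document; each statement's English description precedes it below -/
import Mathlib

section
/- If a sequence of sub-probability measures μ_n on ℝ^d converges vaguely to a sub-probability measure α, then one can write μ_n = α_n + β_n with sub-probability measures α_n, β_n such that α_n converges weakly to α and β_n converges vaguely to 0. -/
open MeasureTheory Filter Topology Metric

/-! Vague convergence bounds the mass of `μ n` on any fixed ball asymptotically by the total
mass of `α`, and a diagonal argument provides radii `R n → ∞` along which this bound persists.
Take `αs n` to be `μ n` restricted to the ball of radius `R n`. Compactly supported test functions
do not see the restriction, so `αs n → α` vaguely; as `αs n` asymptotically carries no more mass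
than `α`, none escapes to infinity, and a cutoff argument upgrades this to weak convergence.
The rest `βs n` lives outside balls of radius `R n → ∞`, so it converges vaguely to `0`. -/

theorem Filter.exists_tendsto_atTop_eventually_diagonal {P : ℕ → ℕ → Prop}
    (h : ∀ k, ∀ᶠ n in atTop, P k n) :
    ∃ R : ℕ → ℕ, Tendsto R atTop atTop ∧ ∀ᶠ n in atTop, P (R n) n := by
  obtain ⟨φ, hφ, hP⟩ := extraction_forall_of_eventually fun k => eventually_forall_ge_atTop.2 (h k)
  -- `R n` is the last index whose threshold `φ (R n)` has been passed by `n`.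
  refine ⟨fun n => Nat.findGreatest (fun k => φ k ≤ n) n, tendsto_atTop_atTop.2 fun K =>
    ⟨φ K, fun n hn => Nat.le_findGreatest (hφ.le_apply.trans hn) hn⟩, ?_⟩
  filter_upwards [eventually_ge_atTop (φ 0)] with n hn
  exact hP _ n (Nat.findGreatest_spec (P := fun k => φ k ≤ n) (Nat.zero_le n) hn)

section Cutoff

variable {E : Type*} [NormedAddCommGroup E]

noncomputable def radialCutoff (r : ℝ) (x : E) : ℝ :=
  max 0 (min 1 (r + 1 - ‖x‖))

theorem continuous_radialCutoff (r : ℝ) : Continuous (radialCutoff (E := E) r) := by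
  unfold radialCutoff; fun_prop

theorem radialCutoff_nonneg (r : ℝ) (x : E) : 0 ≤ radialCutoff r x :=
  le_max_left _ _

theorem radialCutoff_le_one (r : ℝ) (x : E) : radialCutoff r x ≤ 1 :=
  max_le zero_le_one (min_le_left _ _)

theorem radialCutoff_eq_one {r : ℝ} {x : E} (h : ‖x‖ ≤ r) : radialCutoff r x = 1 := by
  rw [radialCutoff, min_eq_left (by linarith), max_eq_right zero_le_one]

theorem radialCutoff_eq_zero {r : ℝ} {x : E} (h : r + 1 ≤ ‖x‖) : radialCutoff r x = 0 :=
  max_eq_left ((min_le_right _ _).trans (by linarith))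

theorem hasCompactSupport_radialCutoff [ProperSpace E] (r : ℝ) :
    HasCompactSupport (radialCutoff (E := E) r) :=
  .intro (isCompact_closedBall 0 (r + 1)) fun _ hx =>
    radialCutoff_eq_zero (not_le.1 (mt mem_closedBall_zero_iff.2 hx)).le

variable [MeasurableSpace E] [OpensMeasurableSpace E] (ν : Measure E) [IsFiniteMeasure ν]

theorem integrable_radialCutoff (r : ℝ) : Integrable (radialCutoff r) ν :=
  .of_bound (continuous_radialCutoff r).aestronglyMeasurable 1 <| ae_of_all _ fun x => by
    rw [Real.norm_of_nonneg (radialCutoff_nonneg r x)]; exact radialCutoff_le_one r x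

theorem measureReal_closedBall_le_integral_radialCutoff (r : ℝ) :
    ν.real (closedBall 0 r) ≤ ∫ x, radialCutoff r x ∂ν := calc
  ν.real (closedBall 0 r) = ∫ x in closedBall 0 r, radialCutoff r x ∂ν := by
    rw [setIntegral_congr_fun measurableSet_closedBall fun x hx =>
      radialCutoff_eq_one (mem_closedBall_zero_iff.1 hx)]
    simp
  _ ≤ ∫ x, radialCutoff r x ∂ν :=
    setIntegral_le_integral (integrable_radialCutoff ν r) (ae_of_all _ (radialCutoff_nonneg r))

theorem integral_radialCutoff_le (r : ℝ) : ∫ x, radialCutoff r x ∂ν ≤ ν.real Set.univ := by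
  simpa using integral_mono (integrable_radialCutoff ν r) (integrable_const 1)
    (radialCutoff_le_one r)

theorem tendsto_integral_radialCutoff :
    Tendsto (fun r => ∫ x, radialCutoff r x ∂ν) atTop (𝓝 (ν.real Set.univ)) := by
  simpa using tendsto_integral_filter_of_dominated_convergence (fun _ => (1 : ℝ))
    (.of_forall fun r => (continuous_radialCutoff r).aestronglyMeasurable)
    (.of_forall fun r => ae_of_all _ fun x => by
      rw [Real.norm_of_nonneg (radialCutoff_nonneg r x)]; exact radialCutoff_le_one r x)
    (integrable_const 1)
    (ae_of_all _ fun x => tendsto_const_nhds.congr' <|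
      (eventually_ge_atTop ‖x‖).mono fun r hr => (radialCutoff_eq_one hr).symm)

theorem abs_integral_sub_integral_mul_radialCutoff_le {f : E → ℝ} (hf : Continuous f) {C : ℝ}
    (hC : ∀ x, |f x| ≤ C) (r : ℝ) :
    |∫ x, f x ∂ν - ∫ x, f x * radialCutoff r x ∂ν| ≤
      C * (ν.real Set.univ - ∫ x, radialCutoff r x ∂ν) := by
  have hχ := integrable_radialCutoff ν r
  have hfi : Integrable f ν :=
    .of_bound hf.aestronglyMeasurable C (ae_of_all _ fun x => (Real.norm_eq_abs _).trans_le (hC x))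
  have hfχ : Integrable (fun x => f x * radialCutoff r x) ν :=
    hχ.bdd_mul hf.aestronglyMeasurable (ae_of_all _ fun x => (Real.norm_eq_abs _).trans_le (hC x))
  have hg : Integrable (fun x => C * (1 - radialCutoff r x)) ν :=
    ((integrable_const 1).sub hχ).const_mul C
  have hbound : ∀ x, ‖f x * (1 - radialCutoff r x)‖ ≤ C * (1 - radialCutoff r x) := fun x => by
    rw [norm_mul, Real.norm_of_nonneg (sub_nonneg.2 (radialCutoff_le_one r x)), Real.norm_eq_abs]
    exact mul_le_mul_of_nonneg_right (hC x) (sub_nonneg.2 (radialCutoff_le_one r x))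
  calc |∫ x, f x ∂ν - ∫ x, f x * radialCutoff r x ∂ν|
      = |∫ x, f x * (1 - radialCutoff r x) ∂ν| := by
        rw [← integral_sub hfi hfχ]; simp only [mul_sub, mul_one]
    _ ≤ ∫ x, C * (1 - radialCutoff r x) ∂ν :=
        norm_integral_le_of_norm_le hg (ae_of_all _ hbound)
    _ = C * (ν.real Set.univ - ∫ x, radialCutoff r x ∂ν) := by
        rw [integral_const_mul, integral_sub (integrable_const 1) hχ]; simp

end Cutoff

section Vague

variable {E : Type*} [NormedAddCommGroup E] {ι : Type*} {l : Filter ι}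

theorem HasCompactSupport.eventually_forall_notMem_closedBall {F : Type*} [Zero F] {f : E → F}
    (hf : HasCompactSupport f) {R : ι → ℝ} (hR : Tendsto R l atTop) :
    ∀ᶠ i in l, ∀ x ∉ closedBall (0 : E) (R i), f x = 0 := by
  obtain ⟨ρ, hρ⟩ := hf.isBounded.subset_closedBall 0
  filter_upwards [hR.eventually_ge_atTop ρ] with i hi x hx
  exact image_eq_zero_of_notMem_tsupport fun hx' => hx (closedBall_subset_closedBall hi (hρ hx'))

variable [MeasurableSpace E]

def TendstoVaguely (ν : ι → Measure E) (l : Filter ι) (ν₀ : Measure E) : Prop :=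
  ∀ f : E → ℝ, Continuous f → HasCompactSupport f →
    Tendsto (fun i => ∫ x, f x ∂(ν i)) l (𝓝 (∫ x, f x ∂ν₀))

theorem TendstoVaguely.restrict_closedBall {ν : ι → Measure E} {ν₀ : Measure E}
    (h : TendstoVaguely ν l ν₀) {R : ι → ℝ} (hR : Tendsto R l atTop) :
    TendstoVaguely (fun i => (ν i).restrict (closedBall 0 (R i))) l ν₀ := fun f hf hcs =>
  (h f hf hcs).congr' <| (hcs.eventually_forall_notMem_closedBall hR).mono fun _ hi =>
    (setIntegral_eq_integral_of_forall_compl_eq_zero hi).symm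

theorem tendstoVaguely_restrict_compl_closedBall (ν : ι → Measure E) {R : ι → ℝ}
    (hR : Tendsto R l atTop) :
    TendstoVaguely (fun i => (ν i).restrict (closedBall 0 (R i))ᶜ) l 0 := fun _ _ hcs => by
  rw [integral_zero_measure]
  exact tendsto_const_nhds.congr' <| (hcs.eventually_forall_notMem_closedBall hR).mono fun _ hi =>
    (setIntegral_eq_zero_of_forall_eq_zero hi).symm

variable [OpensMeasurableSpace E] [ProperSpace E] {ν : ι → Measure E} [∀ i, IsFiniteMeasure (ν i)]
  {ν₀ : Measure E} [IsFiniteMeasure ν₀]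

theorem TendstoVaguely.eventually_measureReal_closedBall_lt (h : TendstoVaguely ν l ν₀) (r : ℝ)
    {ε : ℝ} (hε : 0 < ε) : ∀ᶠ i in l, (ν i).real (closedBall 0 r) < ν₀.real Set.univ + ε := by
  have hlim := h _ (continuous_radialCutoff r) (hasCompactSupport_radialCutoff r)
  filter_upwards [hlim.eventually (gt_mem_nhds <|
    (integral_radialCutoff_le ν₀ r).trans_lt (lt_add_of_pos_right _ hε))] with i hi
  exact (measureReal_closedBall_le_integral_radialCutoff (ν i) r).trans_lt hi

theorem TendstoVaguely.tendsto_integral_of_eventually_measureReal_univ_le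
    (h : TendstoVaguely ν l ν₀)
    (hmass : ∀ ε > 0, ∀ᶠ i in l, (ν i).real Set.univ ≤ ν₀.real Set.univ + ε)
    {f : E → ℝ} (hf : Continuous f) {C : ℝ} (hC : ∀ x, |f x| ≤ C) :
    Tendsto (fun i => ∫ x, f x ∂(ν i)) l (𝓝 (∫ x, f x ∂ν₀)) := by
  have hC₀ : 0 ≤ C := (abs_nonneg _).trans (hC 0)
  refine Metric.tendsto_nhds.2 fun ε hε => ?_
  set δ := ε / (8 * (C + 1)) with hδ_def
  have hδ : 0 < δ := by positivity
  have hCδ : 4 * C * δ ≤ ε / 2 := by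
    rw [hδ_def, mul_div_assoc', div_le_div_iff₀ (by positivity) two_pos]; nlinarith
  obtain ⟨r, hr⟩ : ∃ r, ν₀.real Set.univ - δ < ∫ x, radialCutoff r x ∂ν₀ :=
    ((tendsto_integral_radialCutoff ν₀).eventually (lt_mem_nhds (by linarith))).exists
  have hχ := h _ (continuous_radialCutoff r) (hasCompactSupport_radialCutoff r)
  have hfχ := h (fun x => f x * radialCutoff r x) (hf.mul (continuous_radialCutoff r))
    (hasCompactSupport_radialCutoff r).mul_left
  filter_upwards [hmass δ hδ, hχ.eventually (lt_mem_nhds (sub_lt_self _ hδ)),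
    Metric.tendsto_nhds.1 hfχ (ε / 2) (half_pos hε)] with i hmass_i hχ_i hfχ_i
  rw [Real.dist_eq] at hfχ_i ⊢
  -- Outside the cutoff, `ν i` and `ν₀` carry mass at most `3 δ` and `δ` respectively.
  have htail_i := abs_integral_sub_integral_mul_radialCutoff_le (ν i) hf hC r
  have htail₀ := abs_integral_sub_integral_mul_radialCutoff_le ν₀ hf hC r
  have hmass_tail_i : C * ((ν i).real Set.univ - ∫ x, radialCutoff r x ∂(ν i)) ≤ C * (3 * δ) :=
    mul_le_mul_of_nonneg_left (by linarith) hC₀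
  have hmass_tail₀ : C * (ν₀.real Set.univ - ∫ x, radialCutoff r x ∂ν₀) ≤ C * δ :=
    mul_le_mul_of_nonneg_left (by linarith) hC₀
  rw [abs_lt] at hfχ_i ⊢
  rw [abs_le] at htail_i htail₀
  constructor <;> linarith [htail_i.1, htail_i.2, htail₀.1, htail₀.2]

end Vague

/-- If sub-probability measures μ_n converge vaguely to α, then μ_n = α_n + β_n
where α_n converges weakly to α and β_n converges vaguely to 0. -/
theorem stmt4 (d : ℕ) (μ : ℕ → Measure (EuclideanSpace ℝ (Fin d)))
    (α : Measure (EuclideanSpace ℝ (Fin d)))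
    (hμ : ∀ n, μ n Set.univ ≤ 1) (hα : α Set.univ ≤ 1)
    (hvague : ∀ f : EuclideanSpace ℝ (Fin d) → ℝ, Continuous f → HasCompactSupport f →
      Tendsto (fun n => ∫ x, f x ∂(μ n)) atTop (𝓝 (∫ x, f x ∂α))) :
    ∃ αs βs : ℕ → Measure (EuclideanSpace ℝ (Fin d)),
      (∀ n, αs n + βs n = μ n) ∧
      (∀ f : EuclideanSpace ℝ (Fin d) → ℝ, Continuous f → (∃ C : ℝ, ∀ x, |f x| ≤ C) →
        Tendsto (fun n => ∫ x, f x ∂(αs n)) atTop (𝓝 (∫ x, f x ∂α))) ∧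
      (∀ f : EuclideanSpace ℝ (Fin d) → ℝ, Continuous f → HasCompactSupport f →
        Tendsto (fun n => ∫ x, f x ∂(βs n)) atTop (𝓝 (0 : ℝ))) := by
  have : ∀ n, IsFiniteMeasure (μ n) := fun n => ⟨(hμ n).trans_lt ENNReal.one_lt_top⟩
  have : IsFiniteMeasure α := ⟨hα.trans_lt ENNReal.one_lt_top⟩
  have hv : TendstoVaguely μ atTop α := hvague
  obtain ⟨R, hR, hmass⟩ := exists_tendsto_atTop_eventually_diagonal fun k : ℕ =>
    hv.eventually_measureReal_closedBall_lt k (Nat.one_div_pos_of_nat (n := k))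
  have hR' : Tendsto (fun n => (R n : ℝ)) atTop atTop := tendsto_natCast_atTop_atTop.comp hR
  refine ⟨fun n => (μ n).restrict (closedBall 0 (R n)),
    fun n => (μ n).restrict (closedBall 0 (R n))ᶜ,
    fun n => Measure.restrict_add_restrict_compl measurableSet_closedBall, ?_,
    fun f hf hcs => by simpa using tendstoVaguely_restrict_compl_closedBall μ hR' f hf hcs⟩
  rintro f hf ⟨C, hC⟩
  refine (hv.restrict_closedBall hR').tendsto_integral_of_eventually_measureReal_univ_le
    (fun ε hε => ?_) hf hC
  filter_upwards [hmass, (tendsto_one_div_add_atTop_nhds_zero_nat.comp hR).eventually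
    (gt_mem_nhds hε)] with n hn hεn
  rw [measureReal_restrict_apply_univ]
  exact (hn.trans (add_lt_add_right hεn _)).le
end

section
/- Let (μ_n) be a sequence of sub-probability measures on ℝ^d. If there exists a continuous function V: ℝ^d → ℝ with V > 0 everywhere and V(x) → 0 as |x| → ∞ such that ∫∫ V(x−y) dμ_n(x) dμ_n(y) → 0, then for every r > 0, sup_{x ∈ ℝ^d} μ_n(B(x,r)) → 0 as n → ∞. -/
/-!
A ball of radius `r` around `z` contributes at least `c * μ(B(z, r))²` to the interaction energy,
where `c > 0` bounds `V` from below on the closed ball of radius `2r` (it contains all differences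
`x - y` with `x, y ∈ B(z, r)`). Hence `sup_z μ(B(z, r)) ≤ √(energy / c) → 0`. A continuous `V`
vanishing at infinity is bounded, so `(x, y) ↦ V (x - y)` is integrable for finite measures and
the energy is a genuine integral.
-/

open MeasureTheory Filter Topology Metric

section Product

variable {α : Type*} [MeasurableSpace α] {μ : Measure α} [IsFiniteMeasure μ]

theorem mul_measureReal_sq_le_integral_prod {f : α × α → ℝ} (hf : Integrable f (μ.prod μ))
    (hf0 : 0 ≤ f) {s : Set α} (hs : MeasurableSet s) {c : ℝ} (hc : ∀ p ∈ s ×ˢ s, c ≤ f p) :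
    c * μ.real s ^ 2 ≤ ∫ p, f p ∂μ.prod μ :=
  calc c * μ.real s ^ 2 = c * (μ.prod μ).real (s ×ˢ s) := by rw [measureReal_prod_prod, sq]
    _ ≤ ∫ p in s ×ˢ s, f p ∂μ.prod μ :=
      setIntegral_ge_of_const_le_real (hs.prod hs) (measure_ne_top _ _) hc hf.integrableOn
    _ ≤ ∫ p, f p ∂μ.prod μ := setIntegral_le_integral hf (Eventually.of_forall hf0)

end Product

section Energy

variable {E : Type*} [NormedAddCommGroup E] [MeasurableSpace E] [BorelSpace E]

noncomputable def interactionEnergy (V : E → ℝ) (μ : Measure E) : ℝ :=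
  ∫ x, ∫ y, V (x - y) ∂μ ∂μ

theorem integrable_comp_sub_prod [SecondCountableTopology E] {V : E → ℝ} (hVc : Continuous V)
    (hVb : Bornology.IsBounded (Set.range V)) (μ : Measure E) [IsFiniteMeasure μ] :
    Integrable (fun p : E × E => V (p.1 - p.2)) (μ.prod μ) := by
  obtain ⟨C, hC⟩ := isBounded_iff_forall_norm_le.mp hVb
  exact .of_bound (hVc.comp (continuous_fst.sub continuous_snd)).aestronglyMeasurable C
    (Eventually.of_forall fun p => hC _ (Set.mem_range_self _))

theorem measure_ball_le_sqrt_interactionEnergy [SecondCountableTopology E] {V : E → ℝ}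
    (hVc : Continuous V) (hVb : Bornology.IsBounded (Set.range V)) (hV0 : 0 ≤ V) {r c : ℝ}
    (hc : 0 < c) (hcV : ∀ w ∈ closedBall (0 : E) (2 * r), c ≤ V w)
    (μ : Measure E) [IsFiniteMeasure μ] (z : E) :
    μ (ball z r) ≤ ENNReal.ofReal √(interactionEnergy V μ / c) := by
  have hsq : c * μ.real (ball z r) ^ 2 ≤ interactionEnergy V μ := by
    have hint := integrable_comp_sub_prod hVc hVb μ
    rw [interactionEnergy, integral_integral (f := fun x y => V (x - y)) hint]
    refine mul_measureReal_sq_le_integral_prod hint (fun p => hV0 _) measurableSet_ball ?_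
    rintro ⟨x, y⟩ ⟨hx, hy⟩
    refine hcV _ (mem_closedBall_zero_iff.mpr ?_)
    rw [← dist_eq_norm]
    linarith [dist_triangle_right x y z, mem_ball.mp hx, mem_ball.mp hy]
  rw [← ofReal_measureReal (measure_ne_top μ _)]
  refine ENNReal.ofReal_le_ofReal (Real.le_sqrt_of_sq_le ?_)
  rwa [le_div_iff₀ hc, mul_comm]

end Energy

/-- If for some strictly positive continuous V vanishing at infinity the energy
∫∫ V(x-y) dμ_n dμ_n tends to 0, then the concentration functions of μ_n tend to 0. -/
theorem stmt5 (d : ℕ) (μ : ℕ → Measure (EuclideanSpace ℝ (Fin d)))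
    (hμ : ∀ n, μ n Set.univ ≤ 1)
    (V : EuclideanSpace ℝ (Fin d) → ℝ) (hVc : Continuous V) (hVpos : ∀ x, 0 < V x)
    (hV0 : Tendsto V (cocompact (EuclideanSpace ℝ (Fin d))) (𝓝 0))
    (hint : Tendsto (fun n => ∫ x, ∫ y, V (x - y) ∂(μ n) ∂(μ n)) atTop (𝓝 0)) :
    ∀ r : ℝ, 0 < r →
      Tendsto (fun n => ⨆ x : EuclideanSpace ℝ (Fin d), μ n (ball x r)) atTop (𝓝 0) := by
  intro r _
  have hfin n : IsFiniteMeasure (μ n) := ⟨(hμ n).trans_lt ENNReal.one_lt_top⟩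
  have hVb := ZeroAtInftyContinuousMap.isBounded_range ⟨⟨V, hVc⟩, hV0⟩
  obtain ⟨c, hc, hcV⟩ := (isCompact_closedBall (0 : EuclideanSpace ℝ (Fin d)) (2 * r))
    |>.exists_forall_le' hVc.continuousOn fun w _ => hVpos w
  have hE : Tendsto (fun n => interactionEnergy V (μ n)) atTop (𝓝 0) := hint
  have hbound : Tendsto (fun n => ENNReal.ofReal √(interactionEnergy V (μ n) / c)) atTop (𝓝 0) := by
    simpa [Function.comp_def] using
      ((ENNReal.continuous_ofReal.comp Real.continuous_sqrt).tendsto (0 / c)).comp (hE.div_const c)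
  exact tendsto_of_tendsto_of_tendsto_of_le_of_le tendsto_const_nhds hbound (fun n => zero_le)
    fun n => iSup_le fun z =>
      measure_ball_le_sqrt_interactionEnergy hVc hVb (fun w => (hVpos w).le) hc hcV (μ n) z
end

section
/- Let (μ_n) be a sequence of sub-probability measures on ℝ^d such that for every r > 0, sup_{x∈ℝ^d} μ_n(B(x,r)) → 0 as n → ∞. Then for every continuous function V: ℝ^d → ℝ vanishing at infinity, sup_{x∈ℝ^d} ∫ |V(x−y)| dμ_n(y) → 0 as n → ∞. -/
open MeasureTheory Filter Topology Metric

/-- If the concentration functions of sub-probability measures μ_n tend to 0 for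
every radius, then for every continuous V vanishing at infinity,
sup_x ∫ |V(x-y)| dμ_n(y) → 0. -/
theorem stmt6 (d : ℕ) (μ : ℕ → Measure (EuclideanSpace ℝ (Fin d)))
    (hμ : ∀ n, μ n Set.univ ≤ 1)
    (hdis : ∀ r : ℝ, 0 < r →
      Tendsto (fun n => ⨆ x : EuclideanSpace ℝ (Fin d), μ n (ball x r)) atTop (𝓝 0))
    (V : EuclideanSpace ℝ (Fin d) → ℝ) (hVc : Continuous V)
    (hV0 : Tendsto V (cocompact (EuclideanSpace ℝ (Fin d))) (𝓝 0)) :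
    Tendsto (fun n => ⨆ x : EuclideanSpace ℝ (Fin d),
        ∫⁻ y, ENNReal.ofReal |V (x - y)| ∂(μ n)) atTop (𝓝 0) := by
  rw [ENNReal.tendsto_nhds_zero]
  intro ε hε
  -- choose real δ > 0 with ofReal δ ≤ ε/2
  set δ : ℝ := ((ε / 2) ⊓ 1).toReal with hδdef
  have hmin_ne_top : ((ε / 2) ⊓ 1 : ENNReal) ≠ ⊤ := by
    exact ne_top_of_le_ne_top ENNReal.one_ne_top inf_le_right
  have hmin_pos : (0 : ENNReal) < (ε / 2) ⊓ 1 := by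
    rw [lt_inf_iff]
    exact ⟨ENNReal.div_pos hε.ne' ENNReal.ofNat_ne_top, one_pos⟩
  have hδpos : 0 < δ := ENNReal.toReal_pos hmin_pos.ne' hmin_ne_top
  have hδle : ENNReal.ofReal δ ≤ ε / 2 := by
    rw [hδdef, ENNReal.ofReal_toReal hmin_ne_top]
    exact inf_le_left
  -- vanishing at infinity: |V| < δ outside a compact K
  have hsmall : {x | |V x| < δ} ∈ cocompact (EuclideanSpace ℝ (Fin d)) := by
    have := hV0 (Metric.ball_mem_nhds 0 hδpos)
    filter_upwards [this] with x hx
    simpa [Real.dist_eq] using hx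
  obtain ⟨K, hKc, hKsub⟩ := mem_cocompact.1 hsmall
  obtain ⟨R, hKR⟩ := hKc.isBounded.subset_closedBall 0
  set R' : ℝ := max R 0 + 1 with hR'def
  have hR'pos : 0 < R' := by positivity
  have hKball : K ⊆ ball (0 : EuclideanSpace ℝ (Fin d)) R' := by
    intro x hx
    have := hKR hx
    rw [mem_closedBall] at this
    rw [mem_ball]
    calc dist x 0 ≤ R := this
      _ ≤ max R 0 := le_max_left _ _
      _ < R' := by rw [hR'def]; linarith
  -- bound for |V| everywhere
  obtain ⟨M, hM⟩ : ∃ M : ℝ, ∀ x, |V x| ≤ M := by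
    obtain ⟨M, hM⟩ := (isCompact_closedBall (0 : EuclideanSpace ℝ (Fin d)) R').exists_bound_of_continuousOn
      (hVc.abs.continuousOn)
    refine ⟨max M δ, fun x => ?_⟩
    by_cases hx : x ∈ closedBall (0 : EuclideanSpace ℝ (Fin d)) R'
    · calc |V x| = ‖|V x|‖ := (Real.norm_of_nonneg (abs_nonneg _)).symm
        _ ≤ M := hM x hx
        _ ≤ max M δ := le_max_left _ _
    · have hxK : x ∉ K := fun h => hx (mem_closedBall.2 ((mem_ball.1 (hKball h)).le))
      exact le_trans (hKsub hxK).le (le_max_right _ _)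
  set Mb : ENNReal := ENNReal.ofReal M with hMbdef
  have hMb_ne_top : Mb ≠ ⊤ := ENNReal.ofReal_ne_top
  -- pointwise integral bound
  have key : ∀ n x, ∫⁻ y, ENNReal.ofReal |V (x - y)| ∂(μ n) ≤
      Mb * μ n (ball x R') + ε / 2 := by
    intro n x
    have hb : ∀ y, ENNReal.ofReal |V (x - y)| ≤
        (ball x R').indicator (fun _ => Mb) y + ENNReal.ofReal δ := by
      intro y
      by_cases hy : y ∈ ball x R'
      · rw [Set.indicator_of_mem hy]
        calc ENNReal.ofReal |V (x - y)| ≤ Mb := ENNReal.ofReal_le_ofReal (hM _)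
          _ ≤ Mb + ENNReal.ofReal δ := le_self_add
      · rw [Set.indicator_of_notMem hy]
        have hxy : x - y ∉ K := by
          intro hmem
          apply hy
          have := hKball hmem
          rw [mem_ball] at this ⊢
          rw [dist_zero_right, ← dist_eq_norm] at this
          rwa [dist_comm]
        calc ENNReal.ofReal |V (x - y)| ≤ ENNReal.ofReal δ :=
              ENNReal.ofReal_le_ofReal (hKsub hxy).le
          _ ≤ 0 + ENNReal.ofReal δ := by rw [zero_add]
    calc ∫⁻ y, ENNReal.ofReal |V (x - y)| ∂(μ n)
        ≤ ∫⁻ y, ((ball x R').indicator (fun _ => Mb) y + ENNReal.ofReal δ) ∂(μ n) :=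
          lintegral_mono hb
      _ = Mb * μ n (ball x R') + ENNReal.ofReal δ * μ n Set.univ := by
          rw [lintegral_add_right _ measurable_const,
            lintegral_indicator_const measurableSet_ball, lintegral_const]
      _ ≤ Mb * μ n (ball x R') + ε / 2 := by
          gcongr
          calc ENNReal.ofReal δ * μ n Set.univ ≤ ENNReal.ofReal δ * 1 := by
                gcongr; exact hμ n
            _ = ENNReal.ofReal δ := mul_one _
            _ ≤ ε / 2 := hδle
  -- the concentration term is eventually small
  have hconc : Tendsto (fun n => Mb * ⨆ x : EuclideanSpace ℝ (Fin d), μ n (ball x R'))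
      atTop (𝓝 0) := by
    have := ENNReal.Tendsto.const_mul (hdis R' hR'pos) (Or.inr hMb_ne_top)
    simpa using this
  have hev : ∀ᶠ n in atTop,
      Mb * (⨆ x : EuclideanSpace ℝ (Fin d), μ n (ball x R')) ≤ ε / 2 :=
    (ENNReal.tendsto_nhds_zero.1 hconc) (ε / 2)
      (ENNReal.div_pos hε.ne' ENNReal.ofNat_ne_top)
  filter_upwards [hev] with n hn
  calc (⨆ x : EuclideanSpace ℝ (Fin d), ∫⁻ y, ENNReal.ofReal |V (x - y)| ∂(μ n))
      ≤ Mb * (⨆ x : EuclideanSpace ℝ (Fin d), μ n (ball x R')) + ε / 2 := by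
        refine iSup_le fun x => (key n x).trans ?_
        gcongr
        exact le_iSup (fun x => μ n (ball x R')) x
    _ ≤ ε / 2 + ε / 2 := by gcongr
    _ = ε := ENNReal.add_halves ε
end

section
/- Let (μ_n) be a sequence of sub-probability measures on ℝ^d such that for every r > 0, sup_x μ_n(B(x,r)) → 0 (total disintegration). Then for every k ≥ 2 and every continuous translation-invariant function f: (ℝ^d)^k → ℝ vanishing at infinity (i.e., f(x_1+y,…,x_k+y)=f(x_1,…,x_k) for all y, and f → 0 as max_{i≠j}|x_i−x_j| → ∞), the k-fold integral ∫…∫ f(x_1,…,x_k) dμ_n(x_1)⋯dμ_n(x_k) → 0. -/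
/-!
A translation-invariant `f` vanishing at infinity is bounded, say by `C`, since it is determined
by its values on the compact set of configurations with `x i₀ = 0` and pairwise distances `≤ M`.
Given `ε`, choose `M` with `|f| ≤ ε` once two points are `M` apart. Then `f` can exceed `ε` only
on `{x | dist (x 1) (x 0) < M}`, whose product measure is, by Fubini, at most the concentration
`sup_y μ_n (ball y M)`, which tends to `0`. So `|∫ f| ≤ ε + C · sup_y μ_n (ball y M)`.
-/

open MeasureTheory Filter Topology Metric

namespace MeasureTheory.Measure

variable {ι : Type*} [Fintype ι] {α : ι → Type*} [∀ i, MeasurableSpace (α i)]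
  {μ : ∀ i, Measure (α i)} [∀ i, SigmaFinite (μ i)]

lemma pi_univ_le_one (hμ : ∀ i, μ i Set.univ ≤ 1) : Measure.pi μ Set.univ ≤ 1 := by
  rw [pi_univ]
  exact Finset.prod_le_one (fun _ _ => zero_le) fun i _ => hμ i

lemma pi_eval_preimage_le [DecidableEq ι] (hμ : ∀ i, μ i Set.univ ≤ 1) (i : ι)
    (s : Set (α i)) : Measure.pi μ (Function.eval i ⁻¹' s) ≤ μ i s := by
  rw [Set.eval_preimage, pi_pi, ← Finset.mul_prod_erase _ _ (Finset.mem_univ i),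
    Function.update_self]
  exact mul_le_of_le_one_right zero_le <| Finset.prod_le_one (fun _ _ => zero_le) fun j _ =>
    (measure_mono (Set.subset_univ _)).trans (hμ j)

end MeasureTheory.Measure

noncomputable def concentration {α : Type*} [PseudoMetricSpace α] [MeasurableSpace α]
    (μ : Measure α) (r : ℝ) : ENNReal :=
  ⨆ x, μ (ball x r)

lemma concentration_le_measure_univ {α : Type*} [PseudoMetricSpace α] [MeasurableSpace α]
    (μ : Measure α) (r : ℝ) : concentration μ r ≤ μ Set.univ :=
  iSup_le fun _ => measure_mono (Set.subset_univ _)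

lemma measure_pi_dist_lt_le_concentration {ι α : Type*} [Fintype ι] [PseudoMetricSpace α]
    [MeasurableSpace α] [OpensMeasurableSpace α] [SecondCountableTopology α]
    {μ : Measure α} [SigmaFinite μ] (hμ : μ Set.univ ≤ 1) {i j : ι} (hij : i ≠ j) (r : ℝ) :
    Measure.pi (fun _ : ι => μ) {x | dist (x i) (x j) < r} ≤ concentration μ r := by
  classical
  let e := MeasurableEquiv.piEquivPiSubtypeProd (fun _ : ι => α) (· = j)
  set S : Set (({l // l = j} → α) × ({l // ¬l = j} → α)) :=
    {p | dist (p.2 ⟨i, hij⟩) (p.1 ⟨j, rfl⟩) < r}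
  have hSm : MeasurableSet S :=
    measurableSet_lt
      (((measurable_pi_apply (⟨i, hij⟩ : {l // ¬l = j})).comp measurable_snd).dist
        ((measurable_pi_apply (⟨j, rfl⟩ : {l // l = j})).comp measurable_fst)) measurable_const
  have hslice : ∀ u, Measure.pi (fun _ => μ) (Prod.mk u ⁻¹' S) ≤ concentration μ r := fun u =>
    calc Measure.pi (fun _ => μ) (Prod.mk u ⁻¹' S)
        = Measure.pi (fun _ => μ)
            (Function.eval (⟨i, hij⟩ : {l // ¬l = j}) ⁻¹' ball (u ⟨j, rfl⟩) r) := rfl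
      _ ≤ μ (ball (u ⟨j, rfl⟩) r) := Measure.pi_eval_preimage_le (fun _ => hμ) _ _
      _ ≤ concentration μ r := le_iSup (fun y => μ (ball y r)) _
  rw [show {x : ι → α | dist (x i) (x j) < r} = e ⁻¹' S from rfl,
    (measurePreserving_piEquivPiSubtypeProd (fun _ : ι => μ) (· = j)).measure_preimage
      hSm.nullMeasurableSet, Measure.prod_apply hSm]
  calc _ ≤ ∫⁻ _, concentration μ r ∂_ := lintegral_mono hslice
    _ ≤ concentration μ r := by
      rw [lintegral_const]
      -- `convert` reconciles two `Fintype` instances on `{l // l = j}`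
      exact mul_le_of_le_one_right zero_le (by convert Measure.pi_univ_le_one fun _ => hμ)

lemma exists_forall_abs_le_of_translation_invariant {ι E : Type*} [Fintype ι]
    [NormedAddCommGroup E] [ProperSpace E] {f : (ι → E) → ℝ} (hfc : Continuous f)
    (hinv : ∀ (x : ι → E) (y : E), f (fun i => x i + y) = f x) {M c : ℝ}
    (hvanish : ∀ x : ι → E, (∃ i j, i ≠ j ∧ M ≤ ‖x i - x j‖) → |f x| ≤ c) :
    ∃ C, ∀ x, |f x| ≤ C := by
  obtain ⟨C₀, hC₀⟩ := (isCompact_closedBall (0 : ι → E) (max M 0)).exists_bound_of_continuousOn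
    hfc.continuousOn
  refine ⟨max c C₀, fun x => ?_⟩
  by_cases hfar : ∃ i j, i ≠ j ∧ M ≤ ‖x i - x j‖
  · exact (hvanish x hfar).trans (le_max_left _ _)
  push Not at hfar
  rcases isEmpty_or_nonempty ι with hι | ⟨⟨i₀⟩⟩
  · rw [Subsingleton.elim x 0, ← Real.norm_eq_abs]
    exact (hC₀ 0 (mem_closedBall_self (le_max_right M 0))).trans (le_max_right _ _)
  have hnear : (fun i => x i + -x i₀) ∈ closedBall (0 : ι → E) (max M 0) := by
    rw [mem_closedBall_zero_iff, pi_norm_le_iff_of_nonneg (le_max_right M 0)]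
    intro i
    rw [← sub_eq_add_neg]
    rcases eq_or_ne i i₀ with rfl | hi
    · simp
    · exact (hfar i i₀ hi).le.trans (le_max_left M 0)
  rw [← hinv x (-x i₀), ← Real.norm_eq_abs]
  exact (hC₀ _ hnear).trans (le_max_right _ _)

lemma abs_integral_le_of_abs_le_on_compl {α : Type*} [MeasurableSpace α] {ν : Measure α}
    [IsFiniteMeasure ν] (hν : ν Set.univ ≤ 1) {f : α → ℝ} (hf : AEStronglyMeasurable f ν)
    {A : Set α} (hA : MeasurableSet A) {ε C : ℝ} (hε : 0 ≤ ε) (hC : ∀ x, |f x| ≤ C)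
    (hcompl : ∀ x ∉ A, |f x| ≤ ε) : |∫ x, f x ∂ν| ≤ ε + C * ν.real A := by
  have hfi : Integrable f ν := .of_bound hf C (ae_of_all _ hC)
  have hAc : ν.real Aᶜ ≤ 1 := by
    rw [measureReal_def]
    exact ENNReal.toReal_le_of_le_ofReal zero_le_one
      (((measure_mono (Set.subset_univ _)).trans hν).trans ENNReal.ofReal_one.ge)
  calc |∫ x, f x ∂ν| = |∫ x in A, f x ∂ν + ∫ x in Aᶜ, f x ∂ν| := by
        rw [integral_add_compl hA hfi]
    _ ≤ ‖∫ x in A, f x ∂ν‖ + ‖∫ x in Aᶜ, f x ∂ν‖ := abs_add_le _ _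
    _ ≤ C * ν.real A + ε * ν.real Aᶜ := add_le_add
      (norm_setIntegral_le_of_norm_le_const (measure_lt_top _ _) fun x _ => hC x)
      (norm_setIntegral_le_of_norm_le_const (measure_lt_top _ _) hcompl)
    _ ≤ ε + C * ν.real A := by nlinarith

/-- Total disintegration: if sup_x μ_n(B(x,r)) → 0 for every r > 0, then for every
k ≥ 2 and every continuous, translation-invariant f : (ℝ^d)^k → ℝ vanishing at
infinity, the k-fold integral of f against μ_n^{⊗k} tends to 0. -/
theorem stmt7 (d k : ℕ) (hk : 2 ≤ k) (μ : ℕ → Measure (EuclideanSpace ℝ (Fin d)))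
    [∀ n, IsFiniteMeasure (μ n)] (hμ : ∀ n, μ n Set.univ ≤ 1)
    (hdis : ∀ r : ℝ, 0 < r →
      Tendsto (fun n => ⨆ x : EuclideanSpace ℝ (Fin d), μ n (ball x r)) atTop (𝓝 0))
    (f : (Fin k → EuclideanSpace ℝ (Fin d)) → ℝ) (hfc : Continuous f)
    (hinv : ∀ (x : Fin k → EuclideanSpace ℝ (Fin d)) (y : EuclideanSpace ℝ (Fin d)),
      f (fun i => x i + y) = f x)
    (hvanish : ∀ ε : ℝ, 0 < ε → ∃ M : ℝ, ∀ x : Fin k → EuclideanSpace ℝ (Fin d),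
      (∃ i j, i ≠ j ∧ M ≤ ‖x i - x j‖) → |f x| ≤ ε) :
    Tendsto (fun n => ∫ x, f x ∂(Measure.pi fun _ : Fin k => μ n)) atTop (𝓝 0) := by
  obtain ⟨C, hC⟩ :=
    exists_forall_abs_le_of_translation_invariant hfc hinv (hvanish 1 one_pos).choose_spec
  have hC₀ : 0 ≤ C := (abs_nonneg _).trans (hC 0)
  have hij : (⟨1, hk⟩ : Fin k) ≠ ⟨0, by omega⟩ := by simp [Fin.ext_iff]
  rw [NormedAddGroup.tendsto_nhds_zero]
  intro ε hε
  obtain ⟨M, hM⟩ := hvanish (ε / 2) (half_pos hε)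
  set r := max M 1
  have hconc : Tendsto (fun n => C * (concentration (μ n) r).toReal) atTop (𝓝 0) := by
    simpa [concentration] using ((ENNReal.tendsto_toReal ENNReal.zero_ne_top).comp
      (hdis r (lt_max_of_lt_right one_pos))).const_mul C
  filter_upwards [hconc.eventually_lt_const (half_pos hε)] with n hn
  set A := {x : Fin k → EuclideanSpace ℝ (Fin d) | dist (x ⟨1, hk⟩) (x ⟨0, by omega⟩) < r}
  have hνA : (Measure.pi fun _ => μ n).real A ≤ (concentration (μ n) r).toReal :=
    ENNReal.toReal_mono (ne_top_of_le_ne_top ENNReal.one_ne_top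
      ((concentration_le_measure_univ _ _).trans (hμ n)))
      (measure_pi_dist_lt_le_concentration (hμ n) hij r)
  have hfar : ∀ x ∉ A, |f x| ≤ ε / 2 := fun x hx =>
    hM x ⟨_, _, hij, by rw [← dist_eq_norm]; exact (le_max_left M 1).trans (not_lt.1 hx)⟩
  calc ‖∫ x, f x ∂(Measure.pi fun _ => μ n)‖
      ≤ ε / 2 + C * (Measure.pi fun _ => μ n).real A :=
        abs_integral_le_of_abs_le_on_compl (Measure.pi_univ_le_one fun _ => hμ n)
          hfc.aestronglyMeasurable (measurableSet_lt ((measurable_pi_apply _).dist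
            (measurable_pi_apply _)) measurable_const) (half_pos hε).le hC hfar
    _ ≤ ε / 2 + C * (concentration (μ n) r).toReal := by gcongr
    _ < ε := by linarith
end

section
/- Let (α_n) and (β_n) be sequences of sub-probability measures on ℝ^d that are widely separated with respect to some strictly positive continuous V vanishing at infinity, i.e., ∫∫ V(x−y) dα_n(x) dβ_n(y) → 0. Then for every continuous W: ℝ^d → ℝ vanishing at infinity, ∫∫ W(x−y) dα_n(x) dβ_n(y) → 0. -/
/-!
Since `W` vanishes at infinity and `V` is positive and continuous, for every `ε > 0` there is a
constant `C` with `|W| ≤ C V + ε` everywhere: outside a compact set `|W| < ε`, and on it `W / V`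
is bounded. Integrating this against sub-probability measures keeps the additive constant `ε`,
so `|∫∫ W(x - y) dβₙ(y) dαₙ(x)| ≤ C ∫∫ V(x - y) dβₙ(y) dαₙ(x) + ε`, whose right side is
eventually below `2ε`.
-/

open MeasureTheory Filter Topology Metric

theorem exists_abs_le_mul_add_of_tendsto_cocompact {X : Type*} [TopologicalSpace X]
    {V W : X → ℝ} (hV : Continuous V) (hVpos : ∀ x, 0 < V x) (hW : Continuous W)
    (hW0 : Tendsto W (cocompact X) (𝓝 0)) {ε : ℝ} (hε : 0 < ε) :
    ∃ C, ∀ x, |W x| ≤ C * V x + ε := by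
  have hsmall : ∀ᶠ x in cocompact X, |W x| < ε := by
    simpa only [Real.dist_eq, sub_zero] using Metric.tendsto_nhds.mp hW0 ε hε
  obtain ⟨K, hK, hKc⟩ := mem_cocompact.mp hsmall
  obtain ⟨C, hC⟩ := hK.exists_bound_of_continuousOn
    (hW.div hV fun x => (hVpos x).ne').continuousOn
  refine ⟨max C 0, fun x => ?_⟩
  have hVx := hVpos x
  by_cases hx : x ∈ K
  · have hratio : |W x / V x| ≤ max C 0 := (hC x hx).trans (le_max_left _ _)
    rw [abs_div, abs_of_pos hVx, div_le_iff₀ hVx] at hratio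
    linarith
  · have : |W x| < ε := hKc hx
    have : 0 ≤ max C 0 * V x := mul_nonneg (le_max_right _ _) hVx.le
    linarith

theorem tendsto_zero_of_forall_abs_le_mul_add {ι : Type*} {l : Filter ι} {a b : ι → ℝ}
    (hb : Tendsto b l (𝓝 0)) (h : ∀ ε > 0, ∃ C, ∀ i, |a i| ≤ C * b i + ε) :
    Tendsto a l (𝓝 0) := by
  refine Metric.tendsto_nhds.mpr fun ε hε => ?_
  obtain ⟨C, hC⟩ := h (ε / 2) (half_pos hε)
  have hCb : ∀ᶠ i in l, C * b i < ε / 2 :=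
    (by simpa using hb.const_mul C : Tendsto (fun i => C * b i) l (𝓝 0)).eventually_lt_const
      (half_pos hε)
  filter_upwards [hCb] with i hi
  rw [Real.dist_eq, sub_zero]
  linarith [hC i]

theorem norm_integral_le_mul_integral_add {α E : Type*} [MeasurableSpace α]
    [NormedAddCommGroup E] [NormedSpace ℝ E] {μ : Measure α} (hμ : μ Set.univ ≤ 1)
    {f : α → E} {g : α → ℝ} {C ε : ℝ} (hε : 0 ≤ ε) (hg : Integrable g μ)
    (hfg : ∀ x, ‖f x‖ ≤ C * g x + ε) :
    ‖∫ x, f x ∂μ‖ ≤ C * ∫ x, g x ∂μ + ε := by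
  have : IsFiniteMeasure μ := ⟨hμ.trans_lt ENNReal.one_lt_top⟩
  have hμ1 : μ.real Set.univ ≤ 1 :=
    ENNReal.toReal_le_of_le_ofReal zero_le_one (by simpa using hμ)
  calc ‖∫ x, f x ∂μ‖ ≤ ∫ x, (C * g x + ε) ∂μ :=
        norm_integral_le_of_norm_le ((hg.const_mul C).add (integrable_const ε))
          (Eventually.of_forall hfg)
    _ = C * ∫ x, g x ∂μ + μ.real Set.univ * ε := by
        rw [integral_add (hg.const_mul C) (integrable_const ε), integral_const_mul,
          integral_const, smul_eq_mul]
    _ ≤ C * ∫ x, g x ∂μ + ε := by nlinarith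

namespace BoundedContinuousFunction

variable {G : Type*} [NormedAddCommGroup G] [MeasurableSpace G] [BorelSpace G]

theorem integrable_comp_sub (V : G →ᵇ ℝ) (ν : Measure G) [IsFiniteMeasure ν] (x : G) :
    Integrable (fun y => V (x - y)) ν :=
  (V.compContinuous ⟨fun y => x - y, by fun_prop⟩).integrable ν

theorem integrable_integral_comp_sub [SecondCountableTopology G] (V : G →ᵇ ℝ)
    (μ ν : Measure G) [IsFiniteMeasure μ] [IsFiniteMeasure ν] :
    Integrable (fun x => ∫ y, V (x - y) ∂ν) μ :=
  ((V.compContinuous ⟨fun p : G × G => p.1 - p.2, by fun_prop⟩).integrable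
    (μ.prod ν)).integral_prod_left

end BoundedContinuousFunction

/-- If sequences of sub-probability measures α_n, β_n are widely separated with
respect to some strictly positive continuous V vanishing at infinity, then they
are widely separated with respect to every continuous W vanishing at infinity. -/
theorem stmt8 (d : ℕ) (α β : ℕ → Measure (EuclideanSpace ℝ (Fin d)))
    (hα : ∀ n, α n Set.univ ≤ 1) (hβ : ∀ n, β n Set.univ ≤ 1)
    (V : EuclideanSpace ℝ (Fin d) → ℝ) (hVc : Continuous V) (hVpos : ∀ x, 0 < V x)
    (hV0 : Tendsto V (cocompact (EuclideanSpace ℝ (Fin d))) (𝓝 0))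
    (hsep : Tendsto (fun n => ∫ x, ∫ y, V (x - y) ∂(β n) ∂(α n)) atTop (𝓝 0))
    (W : EuclideanSpace ℝ (Fin d) → ℝ) (hWc : Continuous W)
    (hW0 : Tendsto W (cocompact (EuclideanSpace ℝ (Fin d))) (𝓝 0)) :
    Tendsto (fun n => ∫ x, ∫ y, W (x - y) ∂(β n) ∂(α n)) atTop (𝓝 0) := by
  have (n : ℕ) : IsFiniteMeasure (α n) := ⟨(hα n).trans_lt ENNReal.one_lt_top⟩
  have (n : ℕ) : IsFiniteMeasure (β n) := ⟨(hβ n).trans_lt ENNReal.one_lt_top⟩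
  let Vb := (⟨⟨V, hVc⟩, hV0⟩ : ZeroAtInftyContinuousMap _ ℝ).toBCF
  refine tendsto_zero_of_forall_abs_le_mul_add hsep fun ε hε => ?_
  obtain ⟨C, hC⟩ := exists_abs_le_mul_add_of_tendsto_cocompact hVc hVpos hWc hW0 hε
  refine ⟨C, fun n => ?_⟩
  refine norm_integral_le_mul_integral_add (E := ℝ) (hα n) hε.le
    (Vb.integrable_integral_comp_sub (α n) (β n)) fun x => ?_
  exact norm_integral_le_mul_integral_add (hβ n) hε.le (Vb.integrable_comp_sub (β n) x)
    fun y => hC (x - y)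
end

section
/- Let φ, ψ: ℝ^d → ℂ be characteristic functions of probability measures such that ∏_{i=1}^k φ(t_i) = ∏_{i=1}^k ψ(t_i) for all k ≥ 2 and all t_1,…,t_k ∈ ℝ^d with ∑_i t_i = 0. Then there exists a ∈ ℝ^d such that φ(t) = ψ(t) e^{i⟨a,t⟩} for all t ∈ ℝ^d. -/
/-!
Taking `k = 2` and `k = 3` shows that `|φ| = |ψ|` and that `χ = φ / ψ` is multiplicative on a ball
around `0` on which `ψ ≠ 0` and `Re χ > 0`. There `arg χ` is additive and continuous, so, extended by
`t ↦ n • arg χ (t / n)`, it is a continuous additive, hence linear, form `⟪a, ·⟫`. Finally the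
relation with `t_1 = ⋯ = t_n = -t / n` and `t_{n+1} = t` carries `φ = ψ e^{i⟨a, ·⟩}` from the ball
to the whole space.
-/

open MeasureTheory Filter Topology Metric

section LocallyAdditive

variable {E F : Type*} [NormedAddCommGroup E] [AddCommGroup F] {θ : E → F} {r : ℝ}

def IsAddOnBall (θ : E → F) (r : ℝ) : Prop :=
  ∀ x y, ‖x‖ < r → ‖y‖ < r → ‖x + y‖ < r → θ (x + y) = θ x + θ y

lemma IsAddOnBall.map_zero (hθ : IsAddOnBall θ r) (hr : 0 < r) : θ 0 = 0 := by
  simpa using hθ 0 0 (by simpa) (by simpa) (by simpa)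

lemma natCast_pos_of_norm_lt_mul {n : ℕ} {x : E} (hx : ‖x‖ < n * r) : (0 : ℝ) < n := by
  rcases n.eq_zero_or_pos with rfl | hn
  · exact absurd hx (by simp)
  · exact_mod_cast hn

lemma norm_lt_floor_add_one_mul (hr : 0 < r) (x : E) : ‖x‖ < (⌊‖x‖ / r⌋₊ + 1 : ℕ) * r := by
  rw [← div_lt_iff₀ hr]
  exact_mod_cast Nat.lt_floor_add_one _

variable [NormedSpace ℝ E] [Module ℝ F]

lemma norm_inv_natCast_smul_lt {n : ℕ} {x : E} (hx : ‖x‖ < n * r) :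
    ‖(n : ℝ)⁻¹ • x‖ < r := by
  rwa [norm_smul, norm_inv, Real.norm_natCast, inv_mul_lt_iff₀ (natCast_pos_of_norm_lt_mul hx)]

namespace IsAddOnBall

lemma map_natCast_smul (hθ : IsAddOnBall θ r) (n : ℕ) {x : E} (hx : ‖(n : ℝ) • x‖ < r) :
    θ ((n : ℝ) • x) = (n : ℝ) • θ x := by
  induction n with
  | zero => simpa using hθ.map_zero ((norm_nonneg _).trans_lt hx)
  | succ n ih =>
    have hnorm : ‖((n + 1 : ℕ) : ℝ) • x‖ = n * ‖x‖ + ‖x‖ := by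
      rw [norm_smul, Real.norm_natCast]; push_cast; ring
    have hn : ‖(n : ℝ) • x‖ < r := by
      rw [norm_smul, Real.norm_natCast]; linarith [norm_nonneg x]
    have h1 : ‖x‖ < r := by linarith [mul_nonneg n.cast_nonneg (norm_nonneg x)]
    rw [Nat.cast_succ, add_smul, one_smul] at hx ⊢
    rw [hθ _ _ hn h1 hx, ih hn, add_smul, one_smul]

lemma natCast_smul_map_inv_smul_mul (hθ : IsAddOnBall θ r) {n m : ℕ} (hm : 0 < m) {x : E}
    (hx : ‖x‖ < n * r) :
    (n : ℝ) • θ ((n : ℝ)⁻¹ • x) = ((n * m : ℕ) : ℝ) • θ (((n * m : ℕ) : ℝ)⁻¹ • x) := by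
  have hm' : (m : ℝ) ≠ 0 := by positivity
  have hsplit : (n : ℝ)⁻¹ • x = (m : ℝ) • (((n * m : ℕ) : ℝ)⁻¹ • x) := by
    rw [smul_smul]; push_cast; field_simp
  rw [hsplit, hθ.map_natCast_smul m (hsplit ▸ norm_inv_natCast_smul_lt hx), smul_smul,
    Nat.cast_mul]

lemma natCast_smul_map_inv_smul_eq (hθ : IsAddOnBall θ r) {n m : ℕ} {x : E}
    (hn : ‖x‖ < n * r) (hm : ‖x‖ < m * r) :
    (n : ℝ) • θ ((n : ℝ)⁻¹ • x) = (m : ℝ) • θ ((m : ℝ)⁻¹ • x) := by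
  rw [hθ.natCast_smul_map_inv_smul_mul (Nat.cast_pos.mp (natCast_pos_of_norm_lt_mul hm)) hn,
    hθ.natCast_smul_map_inv_smul_mul (Nat.cast_pos.mp (natCast_pos_of_norm_lt_mul hn)) hm,
    Nat.mul_comm]

end IsAddOnBall

/-- `⌊‖x‖ / r⌋₊ + 1` is merely some `n` with `‖x‖ < n * r`; for additive `θ` every such `n` gives
the same value (`IsAddOnBall.ballExtension_eq`). -/
noncomputable def ballExtension (θ : E → F) (r : ℝ) (x : E) : F :=
  ((⌊‖x‖ / r⌋₊ + 1 : ℕ) : ℝ) • θ (((⌊‖x‖ / r⌋₊ + 1 : ℕ) : ℝ)⁻¹ • x)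

namespace IsAddOnBall

lemma ballExtension_eq (hθ : IsAddOnBall θ r) {n : ℕ} {x : E} (hn : ‖x‖ < n * r) :
    ballExtension θ r x = (n : ℝ) • θ ((n : ℝ)⁻¹ • x) :=
  have hr : 0 < r :=
    pos_of_mul_pos_right ((norm_nonneg x).trans_lt hn) (natCast_pos_of_norm_lt_mul hn).le
  hθ.natCast_smul_map_inv_smul_eq (norm_lt_floor_add_one_mul hr x) hn

lemma ballExtension_eq_self (hθ : IsAddOnBall θ r) {x : E} (hx : ‖x‖ < r) :
    ballExtension θ r x = θ x := by
  simpa using hθ.ballExtension_eq (n := 1) (by simpa)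

lemma ballExtension_add (hθ : IsAddOnBall θ r) (hr : 0 < r) (x y : E) :
    ballExtension θ r (x + y) = ballExtension θ r x + ballExtension θ r y := by
  set n := (⌊‖x‖ / r⌋₊ + 1) + (⌊‖y‖ / r⌋₊ + 1)
  have hx := norm_lt_floor_add_one_mul hr x
  have hy := norm_lt_floor_add_one_mul hr y
  have hxn : ‖x‖ < n * r := by unfold n; push_cast at hx hy ⊢; nlinarith [norm_nonneg y]
  have hyn : ‖y‖ < n * r := by unfold n; push_cast at hx hy ⊢; nlinarith [norm_nonneg x]
  have hxyn : ‖x + y‖ < n * r := by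
    unfold n; push_cast at hx hy ⊢; linarith [norm_add_le x y]
  have hsmul : (n : ℝ)⁻¹ • (x + y) = (n : ℝ)⁻¹ • x + (n : ℝ)⁻¹ • y := smul_add _ _ _
  rw [hθ.ballExtension_eq hxn, hθ.ballExtension_eq hyn, hθ.ballExtension_eq hxyn, hsmul,
    hθ _ _ (norm_inv_natCast_smul_lt hxn) (norm_inv_natCast_smul_lt hyn)
      (hsmul ▸ norm_inv_natCast_smul_lt hxyn), smul_add]

variable [TopologicalSpace F] [ContinuousSMul ℝ F]

lemma continuous_ballExtension (hθ : IsAddOnBall θ r) (hr : 0 < r)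
    (hcont : ∀ x, ‖x‖ < r → ContinuousAt θ x) : Continuous (ballExtension θ r) := by
  refine continuous_iff_continuousAt.mpr fun x => ?_
  set n := ⌊‖x‖ / r⌋₊ + 1 + 1
  have hnear : ∀ y, dist y x < r → ‖y‖ < n * r := fun y hy => by
    have hx := norm_lt_floor_add_one_mul hr x
    have hy' := norm_le_norm_add_norm_sub' y x
    unfold n
    push_cast at hx ⊢
    rw [dist_eq_norm] at hy
    linarith
  have heq : (fun y => (n : ℝ) • θ ((n : ℝ)⁻¹ • y)) =ᶠ[𝓝 x] ballExtension θ r :=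
    Metric.eventually_nhds_iff.mpr ⟨r, hr, fun y hy => (hθ.ballExtension_eq (hnear y hy)).symm⟩
  refine ContinuousAt.congr ?_ heq
  exact continuousAt_const.smul ((hcont _ (norm_inv_natCast_smul_lt (hnear x (by simpa)))).comp
    (continuous_const_smul _).continuousAt)

lemma exists_continuousLinearMap_eq [T2Space F] (hθ : IsAddOnBall θ r) (hr : 0 < r)
    (hcont : ∀ x, ‖x‖ < r → ContinuousAt θ x) : ∃ ℓ : E →L[ℝ] F, ∀ x, ‖x‖ < r → θ x = ℓ x :=
  ⟨(AddMonoidHom.mk' (ballExtension θ r) (hθ.ballExtension_add hr)).toRealLinearMap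
      (hθ.continuous_ballExtension hr hcont),
    fun _ hx => (hθ.ballExtension_eq_self hx).symm⟩

end IsAddOnBall

end LocallyAdditive

open Complex

lemma exists_eq_exp_mul_I_of_mul_on_ball {E : Type*} [NormedAddCommGroup E] [NormedSpace ℝ E]
    {χ : E → ℂ} {r : ℝ} (hr : 0 < r) (hχ : ∀ x, ‖x‖ < r → ‖χ x‖ = 1 ∧ 0 < (χ x).re)
    (hmul : ∀ x y, ‖x‖ < r → ‖y‖ < r → ‖x + y‖ < r → χ (x + y) = χ x * χ y)
    (hcont : ∀ x, ‖x‖ < r → ContinuousAt χ x) :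
    ∃ ℓ : E →L[ℝ] ℝ, ∀ x, ‖x‖ < r → χ x = exp (ℓ x * I) := by
  have hne : ∀ x, ‖x‖ < r → χ x ≠ 0 := fun x hx h0 => by simpa [h0] using (hχ x hx).1
  have harg : ∀ x, ‖x‖ < r → |arg (χ x)| < Real.pi / 2 := fun x hx =>
    abs_arg_lt_pi_div_two_iff.mpr (.inl (hχ x hx).2)
  have hadd : IsAddOnBall (arg ∘ χ) r := fun x y hx hy hxy => by
    simp only [Function.comp, hmul x y hx hy hxy]
    refine (arg_mul_eq_add_arg_iff (hne x hx) (hne y hy)).mpr ⟨?_, ?_⟩ <;>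
      linarith [abs_lt.mp (harg x hx), abs_lt.mp (harg y hy), Real.pi_pos]
  obtain ⟨ℓ, hℓ⟩ := hadd.exists_continuousLinearMap_eq hr fun x hx =>
    (continuousAt_arg (mem_slitPlane_iff.mpr (.inl (hχ x hx).2))).comp (hcont x hx)
  refine ⟨ℓ, fun x hx => ?_⟩
  rw [← hℓ x hx]
  simpa [(hχ x hx).1] using (norm_mul_exp_arg_mul_I (χ x)).symm

def ZeroSumProdEq {G M : Type*} [AddCommGroup G] [CommMonoid M] (f g : G → M) : Prop :=
  ∀ k : ℕ, 2 ≤ k → ∀ t : Fin k → G, ∑ i, t i = 0 → ∏ i, f (t i) = ∏ i, g (t i)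

namespace ZeroSumProdEq

section CommMonoid

variable {G M : Type*} [AddCommGroup G] [CommMonoid M] {f g : G → M}

lemma pow_mul_eq (h : ZeroSumProdEq f g) {n : ℕ} (hn : 0 < n) {u x : G} (hux : n • u + x = 0) :
    f u ^ n * f x = g u ^ n * g x := by
  simpa [Fin.prod_univ_castSucc] using
    h (n + 1) (by omega) (Fin.snoc (fun _ => u) x) (by simpa [Fin.sum_univ_castSucc] using hux)

lemma mul_neg_eq (h : ZeroSumProdEq f g) (x : G) : f x * f (-x) = g x * g (-x) := by
  simpa using h.pow_mul_eq one_pos (u := x) (x := -x) (by simp)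

lemma mul_mul_neg_add_eq (h : ZeroSumProdEq f g) (x y : G) :
    f x * f y * f (-(x + y)) = g x * g y * g (-(x + y)) := by
  simpa [Fin.prod_univ_three] using
    h 3 (by norm_num) ![x, y, -(x + y)] (by simp [Fin.sum_univ_three])

end CommMonoid

lemma div_add_eq_mul {G K : Type*} [AddCommGroup G] [Field K] {f g : G → K}
    (h : ZeroSumProdEq f g) {x y : G} (hx : g x ≠ 0) (hy : g y ≠ 0) (hxy : g (x + y) ≠ 0)
    (hneg : g (-(x + y)) ≠ 0) :
    f (x + y) / g (x + y) = f x / g x * (f y / g y) := by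
  have key : f x * f y * g (x + y) = g x * g y * f (x + y) := by
    apply mul_right_cancel₀ hneg
    linear_combination (-(f x * f y)) * h.mul_neg_eq (x + y) + f (x + y) * h.mul_mul_neg_add_eq x y
  rw [div_mul_div_comm, div_eq_div_iff hxy (mul_ne_zero hx hy)]
  linear_combination -key

lemma eq_mul_exp_of_norm_lt {E : Type*} [NormedAddCommGroup E] [NormedSpace ℝ E] {f g : E → ℂ}
    (h : ZeroSumProdEq f g) (ℓ : E →L[ℝ] ℝ) {r : ℝ} (hr : 0 < r)
    (hloc : ∀ x, ‖x‖ < r → g x ≠ 0 ∧ f x = g x * exp (ℓ x * I)) (x : E) :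
    f x = g x * exp (ℓ x * I) := by
  obtain ⟨n, hn⟩ := exists_nat_gt (‖x‖ / r)
  rw [div_lt_iff₀ hr] at hn
  have hn0 : (n : ℝ) ≠ 0 := (natCast_pos_of_norm_lt_mul hn).ne'
  set u := -((n : ℝ)⁻¹ • x)
  obtain ⟨hgu, hfu⟩ := hloc u (by simpa [u] using norm_inv_natCast_smul_lt hn)
  have hux : n • u + x = 0 := by simp [u, ← Nat.cast_smul_eq_nsmul ℝ, smul_smul, hn0]
  have hpow := h.pow_mul_eq (Nat.cast_pos.mp (natCast_pos_of_norm_lt_mul hn)) hux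
  rw [hfu, mul_pow] at hpow
  have hcancel : exp (ℓ u * I) ^ n * f x = g x :=
    mul_left_cancel₀ (pow_ne_zero n hgu) (by linear_combination hpow)
  have hexp : exp (ℓ u * I) ^ n * exp (ℓ x * I) = 1 := by
    rw [← exp_nat_mul, ← exp_add, ← exp_zero]
    congr 1
    have hnC : (n : ℂ) ≠ 0 := mod_cast hn0
    simp only [u, map_neg, map_smul, smul_eq_mul]
    push_cast
    field_simp
    ring
  linear_combination (-(f x)) * hexp + exp (ℓ x * I) * hcancel

end ZeroSumProdEq

lemma norm_charFun_eq_of_mul_neg_eq {E : Type*} [NormedAddCommGroup E] [InnerProductSpace ℝ E]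
    [MeasurableSpace E] {μ ν : Measure E}
    (h : ∀ t, charFun μ t * charFun μ (-t) = charFun ν t * charFun ν (-t)) (t : E) :
    ‖charFun μ t‖ = ‖charFun ν t‖ := by
  have hsq := h t
  rw [charFun_neg, charFun_neg, mul_conj', mul_conj'] at hsq
  exact (pow_left_inj₀ (norm_nonneg _) (norm_nonneg _) two_ne_zero).mp (by exact_mod_cast hsq)

/-- If the characteristic functions φ, ψ of two probability measures on ℝ^d
satisfy ∏ φ(t_i) = ∏ ψ(t_i) whenever ∑ t_i = 0, then φ(t) = ψ(t) e^{i⟨a,t⟩} for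
some a ∈ ℝ^d, i.e. the measures agree up to a translation. -/
theorem stmt13 (d : ℕ) (μ ν : Measure (EuclideanSpace ℝ (Fin d)))
    [IsProbabilityMeasure μ] [IsProbabilityMeasure ν]
    (φ ψ : EuclideanSpace ℝ (Fin d) → ℂ)
    (hφ : ∀ t, φ t = ∫ x, Complex.exp (Complex.I * ((inner ℝ t x : ℝ) : ℂ)) ∂μ)
    (hψ : ∀ t, ψ t = ∫ x, Complex.exp (Complex.I * ((inner ℝ t x : ℝ) : ℂ)) ∂ν)
    (h : ∀ k : ℕ, 2 ≤ k → ∀ t : Fin k → EuclideanSpace ℝ (Fin d),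
      (∑ i, t i) = 0 → (∏ i, φ (t i)) = ∏ i, ψ (t i)) :
    ∃ a : EuclideanSpace ℝ (Fin d), ∀ t,
      φ t = ψ t * Complex.exp (Complex.I * ((inner ℝ a t : ℝ) : ℂ)) := by
  obtain rfl : φ = charFun μ := funext fun t => by
    simp_rw [hφ, charFun_apply, real_inner_comm t, mul_comm I]
  obtain rfl : ψ = charFun ν := funext fun t => by
    simp_rw [hψ, charFun_apply, real_inner_comm t, mul_comm I]
  have h : ZeroSumProdEq (charFun μ) (charFun ν) := h
  have hnorm := norm_charFun_eq_of_mul_neg_eq h.mul_neg_eq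
  obtain ⟨r, hr, hball⟩ : ∃ r > 0, ∀ t, ‖t‖ < r →
      charFun ν t ≠ 0 ∧ 0 < (charFun μ t / charFun ν t).re := by
    have hν : ∀ᶠ t in 𝓝 0, charFun ν t ≠ 0 :=
      continuous_charFun.continuousAt.eventually_ne (by simp)
    have hre : ∀ᶠ t in 𝓝 0, 0 < (charFun μ t / charFun ν t).re :=
      continuousAt_const.eventually_lt (continuous_re.continuousAt.comp
        (continuous_charFun.continuousAt.div continuous_charFun.continuousAt (by simp))) (by simp)
    simpa [Metric.eventually_nhds_iff, dist_zero_right] using hν.and hre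
  obtain ⟨ℓ, hℓ⟩ := exists_eq_exp_mul_I_of_mul_on_ball (χ := fun t => charFun μ t / charFun ν t) hr
    (fun t ht => ⟨by rw [norm_div, hnorm, div_self (norm_ne_zero_iff.mpr (hball t ht).1)],
      (hball t ht).2⟩)
    (fun x y hx hy hxy => h.div_add_eq_mul (hball x hx).1 (hball y hy).1 (hball _ hxy).1
      (hball _ (by rwa [norm_neg])).1)
    (fun t ht => continuous_charFun.continuousAt.div continuous_charFun.continuousAt (hball t ht).1)
  refine ⟨(InnerProductSpace.toDual ℝ _).symm ℓ, fun t => ?_⟩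
  rw [InnerProductSpace.toDual_symm_apply, mul_comm I]
  refine h.eq_mul_exp_of_norm_lt ℓ hr (fun t ht => ⟨(hball t ht).1, ?_⟩) t
  rw [← hℓ t ht, mul_div_cancel₀ _ (hball t ht).1]
end
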